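/- arXiv:math/0307307 — 9 statements merged into one kernel-verified Lean document; each statement's English description precedes it below -/
import Mathlib

section
/- For 1 ≤ m ≤ n, the quantities Φ(n:m) := C(n,m) ∑_{j=0}^m (-1)^{j+1} C(m,j) Φ(n-m+j) satisfy ∑_{m=1}^n Φ(n:m) = Φ(n), where Φ(0) = 0. -/
/-- The binomial moments `Φ(n:m)` associated with a sequence `Φ`. -/
noncomputable def phiNM (Φ : ℕ → ℝ) (n m : ℕ) : ℝ :=
  (n.choose m : ℝ) *
    ∑ j ∈ Finset.range (m + 1), (-1 : ℝ) ^ (j + 1) * (m.choose j : ℝ) * Φ (n - m + j)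

/-!
With `E` the shift `Φ ↦ Φ (· + 1)`, the inner sum of `Φ(n:m)` is `-((1 - E)^m E^(n-m) Φ) 0`,
so `∑_{m=0}^n Φ(n:m) = -(((1 - E) + E)^n Φ) 0 = -Φ 0 = 0`; the term `m = 0` is `-Φ n`.
The operator calculus is carried out in `R[X]`, evaluated by the linear functional `X^k ↦ f k`.
-/

open Finset Polynomial

theorem sum_choose_mul_alternating_sum_eq_apply_zero {R : Type*} [CommRing R] (f : ℕ → R)
    (n : ℕ) :
    ∑ m ∈ range (n + 1), (n.choose m : R) *
      ∑ j ∈ range (m + 1), (-1) ^ j * (m.choose j : R) * f (n - m + j) = f 0 := by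
  set L : R[X] →ₗ[R] R := Polynomial.lsum fun k => LinearMap.smulRight LinearMap.id (f k)
  have hL : ∀ a k, L (C a * X ^ k) = a * f k := by
    simp [L, C_mul_X_pow_eq_monomial, sum_monomial_index]
  have expand : ((1 - X) + X : R[X]) ^ n = ∑ m ∈ range (n + 1), ∑ j ∈ range (m + 1),
      C ((n.choose m : R) * ((-1) ^ j * m.choose j)) * X ^ (n - m + j) := by
    rw [add_pow]
    refine sum_congr rfl fun m _ => ?_
    rw [sub_eq_neg_add, add_pow, sum_mul, sum_mul]
    refine sum_congr rfl fun j _ => ?_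
    rw [neg_pow, pow_add]
    simp only [one_pow, mul_one, map_mul, map_pow, map_neg, map_one, map_natCast]
    ring
  have hL1 : L 1 = f 0 := by simpa using hL 1 0
  have := congrArg L expand
  rw [sub_add_cancel, one_pow, hL1] at this
  simpa only [map_sum, hL, mul_sum, mul_assoc] using this.symm

theorem phiNM_eq_neg (Φ : ℕ → ℝ) (n m : ℕ) :
    phiNM Φ n m = -((n.choose m : ℝ) *
      ∑ j ∈ range (m + 1), (-1) ^ j * (m.choose j : ℝ) * Φ (n - m + j)) := by
  simp only [phiNM, pow_succ, mul_sum]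
  rw [← sum_neg_distrib]
  exact sum_congr rfl fun _ _ => by ring

theorem phiNM_zero (Φ : ℕ → ℝ) (n : ℕ) : phiNM Φ n 0 = -Φ n := by
  simp [phiNM]

theorem sum_range_phiNM (Φ : ℕ → ℝ) (n : ℕ) :
    ∑ m ∈ range (n + 1), phiNM Φ n m = -Φ 0 := by
  simp only [phiNM_eq_neg, sum_neg_distrib, sum_choose_mul_alternating_sum_eq_apply_zero]

theorem stmt0_general (Φ : ℕ → ℝ) (hΦ0 : Φ 0 = 0) (n : ℕ) :
    ∑ m ∈ Finset.Icc 1 n, phiNM Φ n m = Φ n := by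
  have hsplit :
      ∑ m ∈ range (n + 1), phiNM Φ n m = phiNM Φ n 0 + ∑ m ∈ Icc 1 n, phiNM Φ n m := by
    rw [range_eq_Ico, sum_eq_sum_Ico_succ_bot (by omega : 0 < n + 1), Ico_add_one_right_eq_Icc]
  rw [sum_range_phiNM, phiNM_zero, hΦ0] at hsplit
  linarith

theorem stmt0 (Φ : ℕ → ℝ) (hΦ0 : Φ 0 = 0) (n : ℕ) (hn : 1 ≤ n) :
    ∑ m ∈ Finset.Icc 1 n, phiNM Φ n m = Φ n :=
  stmt0_general Φ hΦ0 n
end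

section
/- For 1 ≤ m ≤ n, the quantities Φ(n:m) := C(n,m) ∑_{j=0}^m (-1)^{j+1} C(m,j) Φ(n-m+j) (with Φ(0)=0) satisfy the Pascal-type recursion Φ(n:m) = ((m+1)/(n+1)) Φ(n+1:m+1) + ((n-m+1)/(n+1)) Φ(n+1:m). -/
theorem stmt1 (Φ : ℕ → ℝ) (hΦ0 : Φ 0 = 0) (n m : ℕ) (h1 : 1 ≤ m) (h2 : m ≤ n) :
    phiNM Φ n m = ((m : ℝ) + 1) / ((n : ℝ) + 1) * phiNM Φ (n + 1) (m + 1)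
      + ((n : ℝ) - (m : ℝ) + 1) / ((n : ℝ) + 1) * phiNM Φ (n + 1) m := by
  set A := ∑ j ∈ Finset.range (m + 1), (-1 : ℝ) ^ (j + 1) * (m.choose j : ℝ) * Φ (n - m + j)
    with hA
  set B := ∑ j ∈ Finset.range (m + 1), (-1 : ℝ) ^ (j + 1) * (m.choose j : ℝ) * Φ (n + 1 - m + j)
    with hB
  have hidx : ∀ j : ℕ, n + 1 - m + j = n - m + (j + 1) := fun j => by omega
  have key : ∑ j ∈ Finset.range (m + 1 + 1),
      (-1 : ℝ) ^ (j + 1) * ((m + 1).choose j : ℝ) * Φ (n - m + j) = A - B := by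
    rw [Finset.sum_range_succ'
      (fun j => (-1 : ℝ) ^ (j + 1) * ((m + 1).choose j : ℝ) * Φ (n - m + j)) (m + 1)]
    rw [hA, Finset.sum_range_succ'
      (fun j => (-1 : ℝ) ^ (j + 1) * (m.choose j : ℝ) * Φ (n - m + j)) m]
    have h1' : ∀ j ∈ Finset.range (m + 1),
        (-1 : ℝ) ^ (j + 1 + 1) * ((m + 1).choose (j + 1) : ℝ) * Φ (n - m + (j + 1))
          = -((-1 : ℝ) ^ (j + 1) * (m.choose j : ℝ) * Φ (n + 1 - m + j))
            + (-1 : ℝ) ^ (j + 1 + 1) * (m.choose (j + 1) : ℝ) * Φ (n - m + (j + 1)) := by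
      intro j _
      rw [Nat.choose_succ_succ, hidx j]
      push_cast
      ring
    rw [Finset.sum_congr rfl h1', Finset.sum_add_distrib]
    have h2' : ∑ j ∈ Finset.range (m + 1),
          (-1 : ℝ) ^ (j + 1 + 1) * (m.choose (j + 1) : ℝ) * Φ (n - m + (j + 1))
        = ∑ j ∈ Finset.range m,
          (-1 : ℝ) ^ (j + 1 + 1) * (m.choose (j + 1) : ℝ) * Φ (n - m + (j + 1)) := by
      rw [Finset.sum_range_succ, Nat.choose_succ_self]
      simp
    rw [h2', Finset.sum_neg_distrib, hB]
    simp only [Nat.choose_zero_right, Nat.cast_one]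
    ring
  have hc1 : ((m : ℝ) + 1) / ((n : ℝ) + 1) * ((n + 1).choose (m + 1) : ℝ)
      = (n.choose m : ℝ) := by
    have h := Nat.add_one_mul_choose_eq n m
    have h' : ((n : ℝ) + 1) * (n.choose m : ℝ) = ((n + 1).choose (m + 1) : ℝ) * ((m : ℝ) + 1) := by
      exact_mod_cast congrArg (Nat.cast : ℕ → ℝ) h
    have hn : ((n : ℝ) + 1) ≠ 0 := by positivity
    field_simp
    linarith [h']
  have hc2 : ((n : ℝ) - (m : ℝ) + 1) / ((n : ℝ) + 1) * ((n + 1).choose m : ℝ)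
      = (n.choose m : ℝ) := by
    have h := Nat.choose_succ_right_eq (n + 1) m
    have h0 := Nat.add_one_mul_choose_eq n m
    have hnat : (n + 1 - m) * ((n + 1).choose m) = (n + 1) * n.choose m := by
      rw [Nat.mul_comm, ← h]
      exact h0.symm
    have h' : ((n : ℝ) - (m : ℝ) + 1) * ((n + 1).choose m : ℝ)
        = ((n : ℝ) + 1) * (n.choose m : ℝ) := by
      have hc : ((n + 1 - m : ℕ) : ℝ) = (n : ℝ) - (m : ℝ) + 1 := by
        have : (m : ℝ) ≤ (n : ℝ) := by exact_mod_cast h2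
        push_cast [Nat.cast_sub (by omega : m ≤ n + 1)]
        ring
      rw [← hc]
      exact_mod_cast congrArg (Nat.cast : ℕ → ℝ) hnat
    have hn : ((n : ℝ) + 1) ≠ 0 := by positivity
    field_simp
    linarith [h']
  unfold phiNM
  simp only [Nat.add_sub_add_right, key]
  rw [← hA, ← hB]
  linear_combination (B - A) * hc1 - B * hc2
end

section
/- Suppose Φ : ℕ → ℝ satisfies Φ(0) = 0 and Φ(n) > 0 for all n ≥ 1, and define q(n:m) := Φ(n:m)/Φ(n) where Φ(n:m) = C(n,m) ∑_{j=0}^m (-1)^{j+1} C(m,j) Φ(n-m+j). Then for all 1 ≤ m ≤ n, q(n:m) = ((m+1)/(n+1)) q(n+1:m+1) + ((n+1-m)/(n+1)) q(n+1:m) + (1/(n+1)) q(n+1:1) q(n:m). -/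
/-- The decrement matrix `q(n:m) = Φ(n:m)/Φ(n)`. -/
noncomputable def decMatrix (Φ : ℕ → ℝ) (n m : ℕ) : ℝ := phiNM Φ n m / Φ n

open Finset

lemma neg_one_pow_succ_mul_fwdDiff_iter {R : Type*} [CommRing R] (Φ : ℕ → R) (m k : ℕ) :
    (-1 : R) ^ (m + 1) * (fwdDiff 1)^[m] Φ k =
      ∑ j ∈ range (m + 1), (-1 : R) ^ (j + 1) * (m.choose j : R) * Φ (k + j) := by
  rw [fwdDiff_iter_eq_sum_shift, mul_sum]
  refine sum_congr rfl fun j hj => ?_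
  obtain ⟨i, rfl⟩ := Nat.exists_eq_add_of_le (Nat.lt_succ_iff.mp (mem_range.mp hj))
  simp only [Nat.add_sub_cancel_left, zsmul_eq_mul, smul_eq_mul, mul_one]
  have hsq : (-1 : R) ^ i * (-1) ^ i = 1 := by rw [← mul_pow]; simp
  push_cast
  linear_combination (-1 : R) ^ (j + 1) * ((j + i).choose j : R) * Φ (k + j) * hsq

lemma phiNM_eq_choose_mul_fwdDiff_iter (Φ : ℕ → ℝ) (n m : ℕ) :
    phiNM Φ n m = n.choose m * ((-1 : ℝ) ^ (m + 1) * (fwdDiff 1)^[m] Φ (n - m)) := by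
  rw [neg_one_pow_succ_mul_fwdDiff_iter, phiNM]

lemma succ_mul_phiNM (Φ : ℕ → ℝ) {n m : ℕ} (h : m ≤ n) :
    ((n : ℝ) + 1) * phiNM Φ n m
      = ((m : ℝ) + 1) * phiNM Φ (n + 1) (m + 1) + ((n : ℝ) + 1 - m) * phiNM Φ (n + 1) m := by
  have hc₁ : ((m : ℝ) + 1) * (n + 1).choose (m + 1) = ((n : ℝ) + 1) * n.choose m := by
    rw [mul_comm]
    exact_mod_cast (Nat.add_one_mul_choose_eq n m).symm
  have hc₂ : ((n : ℝ) + 1 - m) * (n + 1).choose m = ((n : ℝ) + 1) * n.choose m := by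
    rw [mul_comm, ← Nat.cast_add_one, ← Nat.cast_sub (by omega)]
    exact_mod_cast (Nat.choose_mul_succ_eq n m).symm.trans (mul_comm _ _)
  simp only [phiNM_eq_choose_mul_fwdDiff_iter, Nat.add_sub_add_right, Nat.sub_add_comm h,
    Function.iterate_succ_apply', fwdDiff]
  set D := (fwdDiff 1)^[m] Φ
  linear_combination (-1 : ℝ) ^ (m + 1) * (D (n - m + 1) - D (n - m)) * hc₁
    - (-1 : ℝ) ^ (m + 1) * D (n - m + 1) * hc₂

lemma phiNM_succ_one (Φ : ℕ → ℝ) (n : ℕ) :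
    phiNM Φ (n + 1) 1 = ((n : ℝ) + 1) * (Φ (n + 1) - Φ n) := by
  simp only [phiNM, sum_range_succ, sum_range_zero, Nat.add_sub_cancel, Nat.choose_one_right,
    Nat.choose_self, Nat.choose_zero_right, add_zero]
  push_cast
  ring

theorem stmt2_general (Φ : ℕ → ℝ) (hΦpos : ∀ n : ℕ, 1 ≤ n → 0 < Φ n)
    (n m : ℕ) (h1 : 1 ≤ m) (h2 : m ≤ n) :
    decMatrix Φ n m
      = ((m : ℝ) + 1) / ((n : ℝ) + 1) * decMatrix Φ (n + 1) (m + 1)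
      + ((n : ℝ) + 1 - (m : ℝ)) / ((n : ℝ) + 1) * decMatrix Φ (n + 1) m
      + 1 / ((n : ℝ) + 1) * decMatrix Φ (n + 1) 1 * decMatrix Φ n m := by
  have hΦn : Φ n ≠ 0 := (hΦpos n (h1.trans h2)).ne'
  have hΦn' : Φ (n + 1) ≠ 0 := (hΦpos (n + 1) (Nat.le_add_left 1 n)).ne'
  have hrec := succ_mul_phiNM Φ h2
  unfold decMatrix
  rw [phiNM_succ_one]
  field_simp
  linear_combination Φ n * hrec

theorem stmt2 (Φ : ℕ → ℝ) (hΦ0 : Φ 0 = 0) (hΦpos : ∀ n : ℕ, 1 ≤ n → 0 < Φ n)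
    (n m : ℕ) (h1 : 1 ≤ m) (h2 : m ≤ n) :
    decMatrix Φ n m
      = ((m : ℝ) + 1) / ((n : ℝ) + 1) * decMatrix Φ (n + 1) (m + 1)
      + ((n : ℝ) + 1 - (m : ℝ)) / ((n : ℝ) + 1) * decMatrix Φ (n + 1) m
      + 1 / ((n : ℝ) + 1) * decMatrix Φ (n + 1) 1 * decMatrix Φ n m :=
  stmt2_general Φ hΦpos n m h1 h2
end

section
/- For geometric sampling with parameter x ∈ (0,1], the matrix q(n:m) = C(n,m) x^m (1-x)^{n-m} / (1 - (1-x)^n), 1 ≤ m ≤ n, defines a probability distribution on {1,…,n} for each n and satisfies the regenerative recursion q(n:m) = ((m+1)/(n+1)) q(n+1:m+1) + ((n+1-m)/(n+1)) q(n+1:m) + (1/(n+1)) q(n+1:1) q(n:m). -/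
/-- Decrement matrix of geometric sampling with parameter `x`: the binomial distribution
conditioned on a positive value. -/
noncomputable def geomQ (x : ℝ) (n m : ℕ) : ℝ :=
  (n.choose m : ℝ) * x ^ m * (1 - x) ^ (n - m) / (1 - (1 - x) ^ n)

/-!
The numerator of `geomQ x n m` is the Bernstein polynomial `b n m` evaluated at `x`. Summed over
`m ≥ 1` these give `1 - (1 - x) ^ n` (partition of unity minus the `m = 0` term). The recursion is
degree elevation, `(n + 1) b n m = (m + 1) b (n + 1) (m + 1) + (n + 1 - m) b (n + 1) m` (deleting a
uniform point of a binomial sample leaves a binomial sample), combined with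
`1 - (1 - x) ^ (n + 1) = (1 - (1 - x) ^ n) + x (1 - x) ^ n`, whose last term is
`b (n + 1) 1 / (n + 1)`.
-/

open Polynomial Finset

namespace bernsteinPolynomial

variable (R : Type*) [CommRing R]

theorem add_one_mul_eq {n m : ℕ} (hmn : m ≤ n) :
    ((n : R[X]) + 1) * bernsteinPolynomial R n m =
      ((m : R[X]) + 1) * bernsteinPolynomial R (n + 1) (m + 1) +
        ((n : R[X]) + 1 - m) * bernsteinPolynomial R (n + 1) m := by
  have hup : (((n + 1).choose (m + 1) : ℕ) : R[X]) * ((m : R[X]) + 1) =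
      ((n : R[X]) + 1) * n.choose m := by
    exact_mod_cast congrArg (Nat.cast : ℕ → R[X]) (Nat.add_one_mul_choose_eq n m).symm
  have hdown : (((n + 1).choose m : ℕ) : R[X]) * ((n : R[X]) + 1 - m) =
      ((n : R[X]) + 1) * n.choose m := by
    rw [← Nat.cast_add_one, ← Nat.cast_sub (by omega)]
    exact_mod_cast congrArg (Nat.cast : ℕ → R[X])
      ((Nat.choose_mul_succ_eq n m).symm.trans (Nat.mul_comm _ _))
  simp only [bernsteinPolynomial, Nat.add_sub_add_right, Nat.sub_add_comm hmn]
  linear_combination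
    -(X ^ (m + 1) * (1 - X) ^ (n - m)) * hup - (X ^ m * (1 - X) ^ (n - m + 1)) * hdown

theorem sum_Icc_one (n : ℕ) :
    ∑ m ∈ Icc 1 n, bernsteinPolynomial R n m = 1 - (1 - X) ^ n := by
  have h := bernsteinPolynomial.sum R n
  rw [Nat.range_succ_eq_Icc_zero, ← add_sum_Ioc_eq_sum_Icc n.zero_le, ← Icc_add_one_left_eq_Ioc,
    zero_add] at h
  have h0 : bernsteinPolynomial R n 0 = (1 - X) ^ n := by simp [bernsteinPolynomial]
  linear_combination h - h0

end bernsteinPolynomial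

theorem geomQ_eq_eval_bernsteinPolynomial (x : ℝ) (n m : ℕ) :
    geomQ x n m = (bernsteinPolynomial ℝ n m).eval x / (1 - (1 - x) ^ n) := by
  simp [geomQ, bernsteinPolynomial]

theorem geomQ_add_one_one (x : ℝ) (n : ℕ) :
    geomQ x (n + 1) 1 = ((n : ℝ) + 1) * x * (1 - x) ^ n / (1 - (1 - x) ^ (n + 1)) := by
  simp [geomQ]

section geomQ

variable {x : ℝ}

theorem one_sub_one_sub_pow_pos (hx0 : 0 < x) (hx1 : x ≤ 1) {n : ℕ} (hn : n ≠ 0) :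
    0 < 1 - (1 - x) ^ n := by
  have : (1 - x) ^ n < 1 := pow_lt_one₀ (by linarith) (by linarith) hn
  linarith

theorem geomQ_nonneg (hx0 : 0 ≤ x) (hx1 : x ≤ 1) (n m : ℕ) : 0 ≤ geomQ x n m := by
  have : (1 - x) ^ n ≤ 1 := pow_le_one₀ (by linarith) (by linarith)
  have : 0 ≤ 1 - x := by linarith
  unfold geomQ
  positivity

theorem sum_Icc_geomQ (hx0 : 0 < x) (hx1 : x ≤ 1) {n : ℕ} (hn : n ≠ 0) :
    ∑ m ∈ Icc 1 n, geomQ x n m = 1 := by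
  simp only [geomQ_eq_eval_bernsteinPolynomial, ← sum_div, ← eval_finsetSum,
    bernsteinPolynomial.sum_Icc_one, eval_sub, eval_one, eval_pow, eval_X]
  exact div_self (one_sub_one_sub_pow_pos hx0 hx1 hn).ne'

theorem geomQ_eq_regenerative (hx0 : 0 < x) (hx1 : x ≤ 1) {n m : ℕ} (hn : n ≠ 0)
    (hmn : m ≤ n) :
    geomQ x n m
      = ((m : ℝ) + 1) / ((n : ℝ) + 1) * geomQ x (n + 1) (m + 1)
      + ((n : ℝ) + 1 - (m : ℝ)) / ((n : ℝ) + 1) * geomQ x (n + 1) m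
      + 1 / ((n : ℝ) + 1) * geomQ x (n + 1) 1 * geomQ x n m := by
  have hD := (one_sub_one_sub_pow_pos hx0 hx1 hn).ne'
  have hD' := (one_sub_one_sub_pow_pos hx0 hx1 n.succ_ne_zero).ne'
  have h := congrArg (eval x) (bernsteinPolynomial.add_one_mul_eq ℝ hmn)
  simp only [eval_mul, eval_add, eval_sub, eval_natCast, eval_one] at h
  rw [geomQ_add_one_one]
  simp only [geomQ_eq_eval_bernsteinPolynomial]
  field_simp
  linear_combination (1 - (1 - x) ^ n) * h

end geomQ

theorem stmt5 (x : ℝ) (hx0 : 0 < x) (hx1 : x ≤ 1) :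
    (∀ n m : ℕ, 1 ≤ m → m ≤ n → 0 ≤ geomQ x n m) ∧
    (∀ n : ℕ, 1 ≤ n → ∑ m ∈ Finset.Icc 1 n, geomQ x n m = 1) ∧
    (∀ n m : ℕ, 1 ≤ m → m ≤ n →
      geomQ x n m
        = ((m : ℝ) + 1) / ((n : ℝ) + 1) * geomQ x (n + 1) (m + 1)
        + ((n : ℝ) + 1 - (m : ℝ)) / ((n : ℝ) + 1) * geomQ x (n + 1) m
        + 1 / ((n : ℝ) + 1) * geomQ x (n + 1) 1 * geomQ x n m) :=
  ⟨fun n m _ _ => geomQ_nonneg hx0.le hx1 n m,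
    fun _ hn => sum_Icc_geomQ hx0 hx1 (by omega),
    fun _ _ hm hmn => geomQ_eq_regenerative hx0 hx1 (by omega) hmn⟩
end

section
/- If X has the beta(1,θ) distribution on [0,1] with θ > 0, then the stick-breaking decrement matrix q(n:m) = C(n,m) E[X^m (1-X)^{n-m}] / E[1 - (1-X)^n] equals C(n,m) [θ]_{n-m} m! / ([θ+1]_{n-1} n), where [θ]_k = θ(θ+1)⋯(θ+k-1) is the rising factorial. -/
/-!
Under `beta(1,θ)` the mixed moments are Beta integrals:
`E[X^m (1-X)^a] = θ B(m+1, θ+a) = θ m! / [θ+a]_{m+1}`, the last step being the evaluation of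
`B(k+1, u)` at a natural argument. In particular `E[1 - (1-X)^n] = 1 - θ/(θ+n) = n/(θ+n)`,
and the formula follows from `[θ]_{n-m} [θ+n-m]_{m+1} = [θ]_{n+1} = θ [θ+1]_{n-1} (θ+n)`.
-/

/-- The rising factorial `[x]_k = x(x+1)⋯(x+k-1)`. -/
noncomputable def risingFac (x : ℝ) (k : ℕ) : ℝ := ∏ i ∈ Finset.range k, (x + i)

open Finset MeasureTheory Set

open scoped Nat

lemma risingFac_add (x : ℝ) (a b : ℕ) :
    risingFac x (a + b) = risingFac x a * risingFac (x + a) b := by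
  simp only [risingFac, prod_range_add, Nat.cast_add, add_assoc]

lemma risingFac_succ_right (x : ℝ) (k : ℕ) : risingFac x (k + 1) = risingFac x k * (x + k) :=
  prod_range_succ _ _

lemma risingFac_succ_left (x : ℝ) (k : ℕ) : risingFac x (k + 1) = x * risingFac (x + 1) k := by
  simp only [risingFac, prod_range_succ', Nat.cast_add, Nat.cast_one, Nat.cast_zero, add_zero]
  rw [mul_comm]
  congr 1
  exact prod_congr rfl fun i _ => by ring

lemma risingFac_pos {x : ℝ} (hx : 0 < x) (k : ℕ) : 0 < risingFac x k :=
  prod_pos fun i _ => by positivity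

lemma ofReal_setIntegral_rpow_mul_one_sub_rpow (u v : ℝ) :
    ((∫ x in Ioo (0 : ℝ) 1, x ^ (u - 1) * (1 - x) ^ (v - 1) : ℝ) : ℂ)
      = Complex.betaIntegral u v := by
  rw [Complex.betaIntegral, intervalIntegral.integral_of_le zero_le_one,
    ← integral_Ioc_eq_integral_Ioo, ← integral_complex_ofReal]
  refine setIntegral_congr_fun measurableSet_Ioc fun x hx => ?_
  rw [Complex.ofReal_mul, Complex.ofReal_cpow hx.1.le, Complex.ofReal_cpow (by linarith [hx.2])]
  push_cast
  rfl

lemma setIntegral_pow_mul_one_sub_rpow (m : ℕ) {c : ℝ} (hc : 0 < c) :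
    ∫ x in Ioo (0 : ℝ) 1, x ^ m * (1 - x) ^ (c - 1) = m ! / risingFac c (m + 1) := by
  have h := ofReal_setIntegral_rpow_mul_one_sub_rpow (m + 1) c
  rw [Complex.betaIntegral_symm, show ((m + 1 : ℝ) : ℂ) = (m : ℂ) + 1 by push_cast; rfl,
    Complex.betaIntegral_eval_nat_add_one_right (by simpa using hc)] at h
  simp only [add_sub_cancel_right, Real.rpow_natCast] at h
  exact_mod_cast h

lemma setIntegral_pow_mul_one_sub_pow_mul_beta_one_density {θ : ℝ} (hθ : 0 < θ) (m a : ℕ) :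
    ∫ x in Ioo (0 : ℝ) 1, x ^ m * (1 - x) ^ a * (θ * (1 - x) ^ (θ - 1))
      = θ * m ! / risingFac (θ + a) (m + 1) := by
  have hpow : ∀ x ∈ Ioo (0 : ℝ) 1, x ^ m * (1 - x) ^ a * (θ * (1 - x) ^ (θ - 1))
      = θ * (x ^ m * (1 - x) ^ (θ + a - 1)) := fun x hx => by
    rw [show θ + a - 1 = θ - 1 + a by ring, Real.rpow_add_natCast (by linarith [hx.2])]
    ring
  rw [setIntegral_congr_fun measurableSet_Ioo hpow, integral_const_mul,
    setIntegral_pow_mul_one_sub_rpow m (by positivity), mul_div_assoc]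

lemma setIntegral_one_sub_one_sub_pow_mul_beta_one_density {θ : ℝ} (hθ : 0 < θ) (n : ℕ) :
    ∫ x in Ioo (0 : ℝ) 1, (1 - (1 - x) ^ n) * (θ * (1 - x) ^ (θ - 1)) = n / (θ + n) := by
  have hmoment (a : ℕ) :
      ∫ x in Ioo (0 : ℝ) 1, (1 - x) ^ a * (θ * (1 - x) ^ (θ - 1)) = θ / (θ + a) := by
    simpa [risingFac] using setIntegral_pow_mul_one_sub_pow_mul_beta_one_density hθ 0 a
  have hint (a : ℕ) : IntegrableOn (fun x => (1 - x) ^ a * (θ * (1 - x) ^ (θ - 1))) (Ioo 0 1) :=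
    .of_integral_ne_zero (by rw [hmoment]; positivity)
  have hmoment0 := hmoment 0
  have hint0 := hint 0
  simp only [pow_zero, one_mul, Nat.cast_zero, add_zero, div_self hθ.ne'] at hmoment0 hint0
  simp only [sub_mul, one_mul]
  rw [integral_sub hint0 (hint n), hmoment0, hmoment]
  field_simp
  ring

/-- If `X ~ beta(1,θ)`, with density `θ(1-x)^{θ-1}` on `(0,1)`, the stick-breaking decrement
matrix equals `C(n,m) [θ]_{n-m} m! / ([θ+1]_{n-1} n)`. -/
theorem stmt7 (θ : ℝ) (hθ : 0 < θ) (n m : ℕ) (h1 : 1 ≤ m) (h2 : m ≤ n) :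
    (n.choose m : ℝ) *
        (∫ x in Set.Ioo (0 : ℝ) 1, x ^ m * (1 - x) ^ (n - m) * (θ * (1 - x) ^ (θ - 1)))
      / (∫ x in Set.Ioo (0 : ℝ) 1, (1 - (1 - x) ^ n) * (θ * (1 - x) ^ (θ - 1)))
    = (n.choose m : ℝ) * (risingFac θ (n - m) * (m.factorial : ℝ))
      / (risingFac (θ + 1) (n - 1) * n) := by
  rw [setIntegral_pow_mul_one_sub_pow_mul_beta_one_density hθ,
    setIntegral_one_sub_one_sub_pow_mul_beta_one_density hθ]
  have hn : 1 ≤ n := h1.trans h2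
  have hsplit : risingFac θ (n - m) * risingFac (θ + (n - m : ℕ)) (m + 1)
      = θ * (risingFac (θ + 1) (n - 1) * (θ + n)) := by
    rw [← risingFac_add, show n - m + (m + 1) = n - 1 + 1 + 1 by omega, risingFac_succ_left,
      risingFac_succ_right, Nat.cast_sub hn]
    ring
  have hleft := risingFac_pos hθ (n - m)
  have hright := risingFac_pos (show 0 < θ + (n - m : ℕ) by positivity) (m + 1)
  have hshifted := risingFac_pos (show 0 < θ + 1 by positivity) (n - 1)
  have hn_pos : (0 : ℝ) < n := by exact_mod_cast hn
  field_simp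
  linear_combination -(n.choose m : ℝ) * hsplit
end

section
/- For 0 < α < 1 and any composition (n₁,…,n_k) of n, the product formula with decrement matrix q(n:m) = f(m) r(n-m)/r(n), where f(m) = α[1-α]_{m-1}/m! and r(n) = [α]_n/n! (with r(0)=1), gives p(n₁,…,n_k) = ∏_{j=1}^k f(n_j) / r(n) = (n!/[α]_n) α^k ∏_{j=1}^k [1-α]_{n_j-1}/n_j!. In particular p is a symmetric function of (n₁,…,n_k). -/
/-- Step distribution `f(m) = α[1-α]_{m-1}/m!`. -/
noncomputable def stepF (α : ℝ) (m : ℕ) : ℝ := α * risingFac (1 - α) (m - 1) / m.factorial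

/-- Renewal sequence `r(n) = [α]_n/n!`. -/
noncomputable def renewR (α : ℝ) (n : ℕ) : ℝ := risingFac α n / n.factorial

/-- The `(α,α)` decrement matrix `q(n:m) = f(m) r(n-m)/r(n)`. -/
noncomputable def qAA (α : ℝ) (n m : ℕ) : ℝ := stepF α m * renewR α (n - m) / renewR α n

/-- The product formula `p(n₁,…,n_k) = ∏_j q(N_j : n_j)` for the composition given by a
list `c` of positive integers, with tail sums `N_j = (c.drop j).sum`. -/
noncomputable def pAA (α : ℝ) (c : List ℕ) : ℝ :=
  ∏ j ∈ Finset.range c.length, qAA α ((c.drop j).sum) (c.getD j 0)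


lemma risingFac_pos_s13 {α : ℝ} (hα : 0 < α) (n : ℕ) : 0 < risingFac α n :=
  Finset.prod_pos fun i _ => by positivity

lemma renewR_pos {α : ℝ} (hα : 0 < α) (n : ℕ) : 0 < renewR α n :=
  div_pos (risingFac_pos_s13 hα n) (by exact_mod_cast n.factorial_pos)

lemma prod_getD (g : ℕ → ℝ) : ∀ c : List ℕ,
    ∏ j ∈ Finset.range c.length, g (c.getD j 0) = (c.map g).prod
  | [] => by simp
  | a :: c => by
    rw [List.length_cons, Finset.prod_range_succ']
    simp only [List.getD_cons_succ, List.getD_cons_zero]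
    rw [prod_getD g c, List.map_cons, List.prod_cons, mul_comm]

lemma pAA_eq {α : ℝ} (hα : 0 < α) : ∀ c : List ℕ,
    pAA α c = (c.map (stepF α)).prod / renewR α c.sum
  | [] => by simp [pAA, renewR, risingFac]
  | a :: c => by
    have h0 : renewR α c.sum ≠ 0 := (renewR_pos hα _).ne'
    have h1 : renewR α (a + c.sum) ≠ 0 := (renewR_pos hα _).ne'
    rw [pAA, List.length_cons, Finset.prod_range_succ']
    have hd : ∀ j, ((a :: c).drop (j+1)) = c.drop j := fun j => rfl
    simp only [List.getD_cons_succ, hd, List.drop_zero, List.getD_cons_zero]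
    rw [show (∏ j ∈ Finset.range c.length, qAA α ((c.drop j).sum) (c.getD j 0)) = pAA α c from rfl,
      pAA_eq hα c]
    simp only [qAA, List.sum_cons, Nat.add_sub_cancel_left, List.map_cons, List.prod_cons]
    field_simp

theorem stmt13 (α : ℝ) (hα0 : 0 < α) (hα1 : α < 1)
    (c : List ℕ) (hne : c ≠ []) (hpos : ∀ i ∈ c, 0 < i) :
    pAA α c = (∏ j ∈ Finset.range c.length, stepF α (c.getD j 0)) / renewR α c.sum ∧
    pAA α c = (c.sum.factorial : ℝ) / risingFac α c.sum * α ^ c.length *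
      ∏ j ∈ Finset.range c.length,
        risingFac (1 - α) (c.getD j 0 - 1) / (c.getD j 0).factorial ∧
    (∀ c' : List ℕ, c'.Perm c → pAA α c' = pAA α c) := by
  have h1 : pAA α c = (∏ j ∈ Finset.range c.length, stepF α (c.getD j 0)) / renewR α c.sum := by
    rw [pAA_eq hα0, prod_getD]
  refine ⟨h1, ?_, ?_⟩
  · rw [h1]
    have hrf : risingFac α c.sum ≠ 0 := (risingFac_pos_s13 hα0 _).ne'
    have hfac : (c.sum.factorial : ℝ) ≠ 0 := by exact_mod_cast c.sum.factorial_pos.ne'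
    have hstep : ∏ j ∈ Finset.range c.length, stepF α (c.getD j 0)
        = α ^ c.length * ∏ j ∈ Finset.range c.length,
            risingFac (1 - α) (c.getD j 0 - 1) / (c.getD j 0).factorial := by
      simp [stepF, mul_div_assoc, Finset.prod_mul_distrib]
    rw [hstep, renewR]
    field_simp
  · intro c' hperm
    rw [pAA_eq hα0, pAA_eq hα0, hperm.sum_eq, ((hperm.map (stepF α)).prod_eq)]
end

section
/- For 0 < α < 1, ∑ over all compositions (n₁,…,n_k) of n of (n!/[α]_n) α^k ∏_{j=1}^k [1-α]_{n_j-1}/n_j! equals 1. -/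
/-!
Put `w m = α [1-α]_{m-1} / m!`. Splitting off the first block, `F n = ∑_c ∏_j w n_j` satisfies
`F 0 = 1` and `F (n+1) = ∑_{i+j=n} w (i+1) F j`. Since `w m = -multichoose (-α) m` for `m ≥ 1`,
Chu–Vandermonde, `∑_{i+j=n} multichoose (-α) i * multichoose α j = multichoose 0 n = 0` for
`n ≥ 1`, says that `[α]_n / n! = multichoose α n` obeys the same recursion; hence
`F n = [α]_n / n!`. In generating functions: `(1-x)^{-α} (1 - (1-x)^α) = (1-x)^{-α} - 1`.
-/

open Finset

namespace Composition

def consEquiv (n : ℕ) : (Σ k : Fin (n + 1), Composition (n - k)) ≃ Composition (n + 1) where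
  toFun x :=
    { blocks := (x.1 + 1 : ℕ) :: x.2.blocks
      blocks_pos := by
        rintro i (_ | ⟨_, hi⟩)
        exacts [Nat.succ_pos _, x.2.blocks_pos hi]
      blocks_sum := by
        have := x.1.2
        simp only [List.sum_cons, x.2.blocks_sum]
        omega }
  invFun c :=
    have hc : c.blocks ≠ [] := c.blocks_eq_nil.not.2 n.succ_ne_zero
    have head_pos := c.one_le_blocks (List.head_mem hc)
    have head_add_sum : c.blocks.head hc + c.blocks.tail.sum = n + 1 := by
      rw [← List.sum_cons, List.cons_head_tail, c.blocks_sum]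
    ⟨⟨c.blocks.head hc - 1, by omega⟩,
      ⟨c.blocks.tail, fun hi => c.blocks_pos (List.mem_of_mem_tail hi), by dsimp only; omega⟩⟩
  left_inv _ := rfl
  right_inv c := by
    have hc : c.blocks ≠ [] := c.blocks_eq_nil.not.2 n.succ_ne_zero
    ext1
    show (c.blocks.head hc - 1 + 1) :: c.blocks.tail = c.blocks
    rw [Nat.sub_add_cancel (c.one_le_blocks (List.head_mem hc)), List.cons_head_tail hc]

@[simp]
theorem consEquiv_apply_blocks {n : ℕ} (x : Σ k : Fin (n + 1), Composition (n - k)) :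
    (consEquiv n x).blocks = (x.1 + 1 : ℕ) :: x.2.blocks :=
  rfl

end Composition

section CompositionSum

variable {R : Type*} [CommSemiring R] (f : ℕ → R)

noncomputable def compositionSum (n : ℕ) : R :=
  ∑ c : Composition n, (c.blocks.map f).prod

theorem compositionSum_zero : compositionSum f 0 = 1 := by
  simp [compositionSum, (Composition.blocks_eq_nil _).2, composition_card]

theorem compositionSum_succ (n : ℕ) :
    compositionSum f (n + 1) = ∑ p ∈ antidiagonal n, f (p.1 + 1) * compositionSum f p.2 := by
  rw [compositionSum, ← (Composition.consEquiv n).sum_comp, Fintype.sum_sigma,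
    Nat.sum_antidiagonal_eq_sum_range_succ (fun i j => f (i + 1) * compositionSum f j),
    ← Fin.sum_univ_eq_sum_range (fun i => f (i + 1) * compositionSum f (n - i))]
  refine Fintype.sum_congr _ _ fun k => ?_
  simp only [Composition.consEquiv_apply_blocks, List.map_cons, List.prod_cons, compositionSum,
    mul_sum]

theorem compositionSum_eq_of_recursion {g : ℕ → R} (h0 : g 0 = 1)
    (hsucc : ∀ n, g (n + 1) = ∑ p ∈ antidiagonal n, f (p.1 + 1) * g p.2) (n : ℕ) :
    compositionSum f n = g n := by
  induction n using Nat.strong_induction_on with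
  | _ n ih =>
    rcases n with _ | n
    · rw [compositionSum_zero, h0]
    · rw [compositionSum_succ, hsucc]
      refine sum_congr rfl fun p hp => ?_
      rw [ih p.2 (by have := mem_antidiagonal.1 hp; omega)]

end CompositionSum

namespace Ring

variable {R : Type*} [CommRing R] [BinomialRing R]

theorem multichoose_eq_negOnePow_smul_choose (r : R) (n : ℕ) :
    multichoose r n = Int.negOnePow n • choose (-r) n := by
  rw [choose_neg', smul_smul, ← Int.negOnePow_add, ← two_mul, Int.negOnePow_two_mul, one_smul]

theorem add_multichoose_eq (r s : R) (k : ℕ) :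
    multichoose (r + s) k = ∑ ij ∈ antidiagonal k, multichoose r ij.1 * multichoose s ij.2 := by
  simp_rw [multichoose_eq_negOnePow_smul_choose, neg_add,
    add_choose_eq (r := -r) (s := -s) k (Commute.all _ _), smul_sum, smul_mul_smul_comm, ← Int.negOnePow_add]
  refine sum_congr rfl fun ij hij => ?_
  rw [← Nat.cast_add, mem_antidiagonal.1 hij]

theorem multichoose_succ_eq_sum (r : R) (n : ℕ) :
    multichoose r (n + 1) =
      ∑ p ∈ antidiagonal n, -multichoose (-r) (p.1 + 1) * multichoose r p.2 := by
  have h := add_multichoose_eq (-r) r (n + 1)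
  rw [neg_add_cancel, multichoose_zero_succ, Nat.sum_antidiagonal_succ, multichoose_zero_right,
    one_mul] at h
  simp only [neg_mul, sum_neg_distrib]
  linear_combination -h

end Ring

theorem risingFac_eq_factorial_mul_multichoose (x : ℝ) (n : ℕ) :
    risingFac x n = n.factorial * Ring.multichoose x n := by
  rw [← nsmul_eq_mul, Ring.factorial_nsmul_multichoose_eq_ascPochhammer,
    Polynomial.ascPochhammer_smeval_eq_eval]
  induction n with
  | zero => simp [risingFac]
  | succ n ih => rw [risingFac, prod_range_succ, ascPochhammer_succ_eval, ← ih, risingFac]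

theorem risingFac_neg_succ (x : ℝ) (k : ℕ) :
    risingFac (-x) (k + 1) = -x * risingFac (1 - x) k := by
  simp only [risingFac, prod_range_succ', Nat.cast_add, Nat.cast_one, Nat.cast_zero, add_zero]
  rw [mul_comm]
  congr 1
  exact prod_congr rfl fun i _ => by ring

theorem mul_risingFac_div_factorial_eq_neg_multichoose (x : ℝ) (k : ℕ) :
    x * (risingFac (1 - x) k / (k + 1).factorial) = -Ring.multichoose (-x) (k + 1) := by
  have h := risingFac_eq_factorial_mul_multichoose (-x) (k + 1)
  rw [risingFac_neg_succ] at h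
  field_simp
  linarith

theorem stmt14_general (α : ℝ) (hα0 : 0 < α) (n : ℕ) :
    ∑ c : Composition n,
      (n.factorial : ℝ) / risingFac α n * α ^ c.length *
        (c.blocks.map (fun m => risingFac (1 - α) (m - 1) / (m.factorial : ℝ))).prod = 1 := by
  set w : ℕ → ℝ := fun m => α * (risingFac (1 - α) (m - 1) / m.factorial)
  have hsum : compositionSum w n = Ring.multichoose α n := by
    refine compositionSum_eq_of_recursion w (Ring.multichoose_zero_right α) (fun k => ?_) n
    simp only [w, Nat.add_sub_cancel, mul_risingFac_div_factorial_eq_neg_multichoose]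
    exact Ring.multichoose_succ_eq_sum α k
  have hpos : 0 < risingFac α n := prod_pos fun i _ => by positivity
  calc _ = n.factorial / risingFac α n * compositionSum w n := by
        simp [compositionSum, mul_sum, w, List.prod_map_mul, mul_assoc]
    _ = 1 := by
        rw [div_mul_eq_mul_div, div_eq_one_iff_eq hpos.ne', hsum,
          risingFac_eq_factorial_mul_multichoose]

/-- The `(α,α)` composition probability function sums to one over all compositions of `n`. -/
theorem stmt14 (α : ℝ) (hα0 : 0 < α) (hα1 : α < 1) (n : ℕ) (hn : 1 ≤ n) :
    ∑ c : Composition n,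
      (n.factorial : ℝ) / risingFac α n * α ^ c.length *
        (c.blocks.map (fun m => risingFac (1 - α) (m - 1) / (m.factorial : ℝ))).prod = 1 :=
  stmt14_general α hα0 n
end

section
/- Let Φ : ℕ → ℝ with Φ(0)=0 and Φ(n) ≠ 0 for n ≥ 1. Define g(n,j) = Φ(j) C(n,j) ∑_{a=0}^{n-j} C(n-j,a) (-1)^a / Φ(j+a) for 1 ≤ j ≤ n. Then g(n,n) = 1 and g satisfies the recursion g(n,j) = ((j+1-q(j+1:1))/(n+1)) g(n+1,j+1) + ((n+1-j)/(n+1)) g(n+1,j), where q(j+1:1) = (j+1)(1 - Φ(j)/Φ(j+1)). -/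
/-- The Green matrix `g(n,j) = Φ(j) C(n,j) ∑_{a=0}^{n-j} C(n-j,a) (-1)^a / Φ(j+a)`. -/
noncomputable def greenG (Φ : ℕ → ℝ) (n j : ℕ) : ℝ :=
  Φ j * (n.choose j : ℝ) *
    ∑ a ∈ Finset.range (n - j + 1), ((n - j).choose a : ℝ) * (-1 : ℝ) ^ a / Φ (j + a)

/-! The Green matrix is `Φ(j) C(n,j) S_{n-j}(j)` with the alternating binomial sum
`S_m(j) = ∑_{a ≤ m} C(m,a) (-1)^a / Φ(j+a)`, i.e. `(-1)^m` times the `m`-th forward difference of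
`1/Φ` at `j`. The recursion is then the Pascal rule `S_{m+1}(j) = S_m(j) - S_m(j+1)` combined with
the absorption identities `(j+1) C(n+1,j+1) = (n+1) C(n,j) = (n+1-j) C(n+1,j)`. -/

open Finset

def altBinomialSum {R : Type*} [CommRing R] (f : ℕ → R) (j m : ℕ) : R :=
  ∑ a ∈ range (m + 1), (m.choose a : R) * ((-1) ^ a * f (j + a))

theorem altBinomialSum_succ {R : Type*} [CommRing R] (f : ℕ → R) (j m : ℕ) :
    altBinomialSum f j (m + 1) = altBinomialSum f j m - altBinomialSum f (j + 1) m := by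
  rw [altBinomialSum, sum_choose_succ_mul (fun a _ => (-1) ^ a * f (j + a)) m, sub_eq_add_neg,
    altBinomialSum, altBinomialSum, ← sum_neg_distrib]
  congr 1
  refine sum_congr rfl fun a _ => ?_
  rw [pow_succ, Nat.add_right_comm, Nat.add_assoc]
  ring

theorem greenG_eq_mul_altBinomialSum (Φ : ℕ → ℝ) (n j : ℕ) :
    greenG Φ n j = Φ j * n.choose j * altBinomialSum (fun k => (Φ k)⁻¹) j (n - j) := by
  simp only [greenG, altBinomialSum, div_eq_mul_inv, mul_assoc]

theorem stmt15_general (Φ : ℕ → ℝ) (hΦne : ∀ n : ℕ, 1 ≤ n → Φ n ≠ 0) :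
    (∀ n : ℕ, 1 ≤ n → greenG Φ n n = 1) ∧
    (∀ n j : ℕ, 1 ≤ j → j ≤ n →
      greenG Φ n j
        = ((j : ℝ) + 1 - ((j : ℝ) + 1) * (1 - Φ j / Φ (j + 1))) / ((n : ℝ) + 1)
            * greenG Φ (n + 1) (j + 1)
        + ((n : ℝ) + 1 - (j : ℝ)) / ((n : ℝ) + 1) * greenG Φ (n + 1) j) := by
  refine ⟨fun n hn => by simp [greenG, hΦne n hn], ?_⟩
  intro n j _ hjn
  obtain ⟨m, rfl⟩ := Nat.exists_eq_add_of_le hjn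
  have hΦ : Φ (j + 1) ≠ 0 := hΦne _ j.succ_pos
  have habsorb_top :
      ((j : ℝ) + 1) * (j + m + 1).choose (j + 1) = (j + m + 1) * (j + m).choose j := by
    exact_mod_cast ((Nat.add_one_mul_choose_eq (j + m) j).trans (mul_comm _ _)).symm
  have habsorb_bot : ((m : ℝ) + 1) * (j + m + 1).choose j = (j + m + 1) * (j + m).choose j := by
    have h := Nat.add_one_mul_choose_eq (j + m) m
    rw [← Nat.choose_symm_add, ← Nat.choose_symm_of_eq_add (Nat.add_assoc j m 1)] at h
    exact_mod_cast (h.trans (mul_comm _ _)).symm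
  simp only [greenG_eq_mul_altBinomialSum, Nat.add_sub_cancel_left,
    show j + m + 1 - (j + 1) = m by omega, show j + m + 1 - j = m + 1 by omega,
    altBinomialSum_succ]
  set A := altBinomialSum (fun k => (Φ k)⁻¹) j m
  set B := altBinomialSum (fun k => (Φ k)⁻¹) (j + 1) m
  push_cast
  field_simp
  linear_combination (-Φ j * B) * habsorb_top - Φ j * (A - B) * habsorb_bot

theorem stmt15 (Φ : ℕ → ℝ) (hΦ0 : Φ 0 = 0) (hΦne : ∀ n : ℕ, 1 ≤ n → Φ n ≠ 0) :
    (∀ n : ℕ, 1 ≤ n → greenG Φ n n = 1) ∧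
    (∀ n j : ℕ, 1 ≤ j → j ≤ n →
      greenG Φ n j
        = ((j : ℝ) + 1 - ((j : ℝ) + 1) * (1 - Φ j / Φ (j + 1))) / ((n : ℝ) + 1)
            * greenG Φ (n + 1) (j + 1)
        + ((n : ℝ) + 1 - (j : ℝ)) / ((n : ℝ) + 1) * greenG Φ (n + 1) j) :=
  stmt15_general Φ hΦne
end

section
/- Let Φ(n) with Φ(0)=0, Φ(n)>0, and Φ(n:n) = ∑_{j=0}^n (-1)^{j+1} C(n,j) Φ(j). Define p(n) = Φ(n:n)/Φ(n). Then Φ satisfies the recursion Φ(n)(p(n) + (-1)^n) = ∑_{j=1}^{n-1} (-1)^{j+1} C(n,j) Φ(j), and hence, given Φ(1)=1 and the sequence (p(n))_{n≥2} with this recursion having nonvanishing coefficients p(n)+(-1)^n, the sequence (Φ(n)) is uniquely determined. -/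
/-- The diagonal binomial moment `Φ(n:n) = ∑_{j=0}^n (-1)^{j+1} C(n,j) Φ(j)`. -/
noncomputable def phiDiag (Φ : ℕ → ℝ) (n : ℕ) : ℝ :=
  ∑ j ∈ Finset.range (n + 1), (-1 : ℝ) ^ (j + 1) * (n.choose j : ℝ) * Φ j

lemma recursion_aux (Φ : ℕ → ℝ) (hΦ0 : Φ 0 = 0) (n : ℕ) (hn : 1 ≤ n) (hne : Φ n ≠ 0) :
    Φ n * (phiDiag Φ n / Φ n + (-1 : ℝ) ^ n)
      = ∑ j ∈ Finset.Icc 1 (n - 1), (-1 : ℝ) ^ (j + 1) * (n.choose j : ℝ) * Φ j := by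
  have h1 : Φ n * (phiDiag Φ n / Φ n + (-1 : ℝ) ^ n)
      = phiDiag Φ n + (-1 : ℝ) ^ n * Φ n := by
    field_simp
  rw [h1]
  have h2 : phiDiag Φ n = (∑ j ∈ Finset.range n, (-1 : ℝ) ^ (j + 1) * (n.choose j : ℝ) * Φ j)
      + (-1 : ℝ) ^ (n + 1) * (n.choose n : ℝ) * Φ n := by
    rw [phiDiag, Finset.sum_range_succ]
  rw [h2, Nat.choose_self]
  have h3 : (∑ j ∈ Finset.range n, (-1 : ℝ) ^ (j + 1) * (n.choose j : ℝ) * Φ j)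
      = ∑ j ∈ Finset.Icc 1 (n - 1), (-1 : ℝ) ^ (j + 1) * (n.choose j : ℝ) * Φ j := by
    refine (Finset.sum_subset ?_ ?_).symm
    · intro j hj
      simp only [Finset.mem_Icc] at hj
      exact Finset.mem_range.mpr (lt_of_le_of_lt hj.2 (Nat.sub_lt hn Nat.one_pos))
    · intro j hj hj'
      simp only [Finset.mem_Icc, Finset.mem_range, not_and, not_le] at hj hj'
      have hj0 : j = 0 := by omega
      simp [hj0, hΦ0]
  rw [h3]
  ring

/-- Structural moments determine `Φ`: the recursion
`Φ(n)(p(n)+(-1)^n) = ∑_{j=1}^{n-1} (-1)^{j+1} C(n,j) Φ(j)` holds for `p(n) = Φ(n:n)/Φ(n)`,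
and (given `Φ(1)=1` and nonvanishing coefficients `p(n)+(-1)^n`) any two positive sequences
with the same structural moments coincide. -/
theorem stmt19 (Φ : ℕ → ℝ) (hΦ0 : Φ 0 = 0) (hΦpos : ∀ n : ℕ, 1 ≤ n → 0 < Φ n) :
    (∀ n : ℕ, 1 ≤ n →
      Φ n * (phiDiag Φ n / Φ n + (-1 : ℝ) ^ n)
        = ∑ j ∈ Finset.Icc 1 (n - 1), (-1 : ℝ) ^ (j + 1) * (n.choose j : ℝ) * Φ j) ∧
    (∀ Ψ : ℕ → ℝ, Ψ 0 = 0 → (∀ n : ℕ, 1 ≤ n → 0 < Ψ n) →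
      Φ 1 = 1 → Ψ 1 = 1 →
      (∀ n : ℕ, 1 ≤ n → phiDiag Φ n / Φ n + (-1 : ℝ) ^ n ≠ 0) →
      (∀ n : ℕ, 1 ≤ n → phiDiag Ψ n / Ψ n = phiDiag Φ n / Φ n) →
      ∀ n : ℕ, Ψ n = Φ n) := by
  constructor
  · intro n hn
    exact recursion_aux Φ hΦ0 n hn (ne_of_gt (hΦpos n hn))
  · intro Ψ hΨ0 hΨpos hΦ1 hΨ1 hnz hpeq n
    induction n using Nat.strong_induction_on with
    | _ n ih =>
      match n with
      | 0 => rw [hΨ0, hΦ0]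
      | 1 => rw [hΨ1, hΦ1]
      | (m + 2) =>
        set n := m + 2 with hn
        have hn1 : 1 ≤ n := by omega
        have hΨrec := recursion_aux Ψ hΨ0 n hn1 (ne_of_gt (hΨpos n hn1))
        have hΦrec := recursion_aux Φ hΦ0 n hn1 (ne_of_gt (hΦpos n hn1))
        rw [hpeq n hn1] at hΨrec
        have heq : ∑ j ∈ Finset.Icc 1 (n - 1), (-1 : ℝ) ^ (j + 1) * (n.choose j : ℝ) * Ψ j
            = ∑ j ∈ Finset.Icc 1 (n - 1), (-1 : ℝ) ^ (j + 1) * (n.choose j : ℝ) * Φ j := by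
          refine Finset.sum_congr rfl fun j hj => ?_
          simp only [Finset.mem_Icc] at hj
          rw [ih j (by omega)]
        rw [heq, ← hΦrec] at hΨrec
        exact mul_right_cancel₀ (hnz n hn1) hΨrec
end
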